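/- For every deterministic distributed full-sensing algorithm on a channel with collision detection, consider the execution in which exactly two passive stations are each activated with one packet in the same round and no other packets are ever injected (an injection pattern of a 2-activating adversary of burstiness 2). In this execution the two stations undergo identical state transitions in every round, so every transmission attempt produces a collision and neither packet is ever heard; hence no deterministic distributed algorithm is fair on channels with collision detection against a 2-activating adversary of burstiness at least 2. -/
import Mathlib


/-- Feedback that a station receives from the channel in a round: silence, collision,
or a heard message (with the flag telling whether it was the station's own message). -/
inductive Feedback where
  | silence : Feedback
  | collision : Feedback
  | heard : Bool → Feedback

/-- A deterministic distributed (full-sensing) algorithm: a state set with a designated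
initial state, a transmit predicate, and a deterministic transition function taking the
current state, the round's feedback and whether packets were injected this round. -/
structure Algo where
  State : Type
  init : State
  transmits : State → Bool
  step : State → Feedback → Bool → State

/-- The execution of algorithm `A` in which exactly two (anonymous) passive stations are
each activated with one packet in round `0`, and no other packets are ever injected
(an injection pattern of a 2-activating adversary of burstiness 2).
`(exec2 A t).1 v` is the state of station `v` at the beginning of round `t` and
`(exec2 A t).2 v` is the number of its pending packets at the beginning of round `t`. -/
def exec2 (A : Algo) : ℕ → (Fin 2 → A.State) × (Fin 2 → ℕ)
  | 0 => (fun _ => A.init, fun _ => 0)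
  | t + 1 =>
    let st := (exec2 A t).1
    let pend := (exec2 A t).2
    let tx : Finset (Fin 2) := Finset.univ.filter fun v => 0 < pend v ∧ A.transmits (st v)
    let fb : Fin 2 → Feedback := fun v =>
      if tx.card = 0 then Feedback.silence
      else if tx.card = 1 then Feedback.heard (decide (v ∈ tx))
      else Feedback.collision
    (fun v => A.step (st v) (fb v) (decide (t = 0)),
     fun v => (if v ∈ tx ∧ tx.card = 1 then pend v - 1 else pend v) + (if t = 0 then 1 else 0))

/-- The number of stations transmitting in round `t` of this execution. -/
def txCount2 (A : Algo) (t : ℕ) : ℕ :=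
  (Finset.univ.filter fun v : Fin 2 =>
    0 < (exec2 A t).2 v ∧ A.transmits ((exec2 A t).1 v)).card

lemma exec2_inv (A : Algo) : ∀ t : ℕ,
    ((exec2 A t).1 0 = (exec2 A t).1 1) ∧
    (∀ v : Fin 2, (exec2 A t).2 v = if t = 0 then 0 else 1) := by
  intro t
  induction t with
  | zero => simp [exec2]
  | succ t ih =>
    obtain ⟨hst, hp⟩ := ih
    have hsame : ∀ v : Fin 2, (exec2 A t).1 v = (exec2 A t).1 0 := by
      intro v; fin_cases v <;> simp [hst]
    have hpsame : ∀ v : Fin 2, (exec2 A t).2 v = (exec2 A t).2 0 := by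
      intro v; rw [hp v, hp 0]
    set tx : Finset (Fin 2) :=
      Finset.univ.filter fun v => 0 < (exec2 A t).2 v ∧ A.transmits ((exec2 A t).1 v) with htx
    have hcard : tx.card ≠ 1 := by
      by_cases h : 0 < (exec2 A t).2 0 ∧ A.transmits ((exec2 A t).1 0)
      · have : tx = Finset.univ := by
          apply Finset.eq_univ_iff_forall.mpr
          intro v; rw [htx, Finset.mem_filter, hpsame v, hsame v]
          exact ⟨Finset.mem_univ v, h⟩
        rw [this]; simp
      · have : tx = ∅ := by
          apply Finset.eq_empty_iff_forall_notMem.mpr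
          intro v hv; rw [htx, Finset.mem_filter, hpsame v, hsame v] at hv
          exact h hv.2
        rw [this]; simp
    constructor
    · show A.step _ _ _ = A.step _ _ _
      rw [hst]
      congr 1
      simp only [hcard]
      split <;> rfl
    · intro v
      show (if v ∈ tx ∧ tx.card = 1 then _ else (exec2 A t).2 v) + _ = _
      rw [if_neg (fun h => hcard h.2), hp v]
      rcases Nat.eq_zero_or_pos t with h | h
      · simp [h]
      · simp [h, Nat.pos_iff_ne_zero.mp h]

/-- in this execution both stations undergo identical state transitions in
every round, every transmission attempt produces a collision (no round has exactly one
transmitter, so no message is ever heard), neither packet is ever heard, and hence the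
execution is not fair: no deterministic distributed algorithm is fair on channels with
collision detection against a 2-activating adversary of burstiness at least 2. -/
theorem no_deterministic_algorithm_fair_against_two_activating (A : Algo) :
    (∀ t : ℕ, (exec2 A t).1 0 = (exec2 A t).1 1) ∧
    (∀ t : ℕ, txCount2 A t ≠ 1) ∧
    (∀ t : ℕ, 1 ≤ t → ∀ v : Fin 2, (exec2 A t).2 v = 1) ∧
    ¬ (∀ v : Fin 2, ∃ t : ℕ, 0 < t ∧ (exec2 A t).2 v = 0) := by
  have key := exec2_inv A
  have htx : ∀ t, txCount2 A t ≠ 1 := by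
    intro t
    unfold txCount2
    have hst := (key t).1
    have hp := (key t).2
    by_cases h : 0 < (exec2 A t).2 0 ∧ A.transmits ((exec2 A t).1 0)
    · have : (Finset.univ.filter fun v : Fin 2 =>
          0 < (exec2 A t).2 v ∧ A.transmits ((exec2 A t).1 v)) = Finset.univ := by
        apply Finset.eq_univ_iff_forall.mpr
        intro v
        rw [Finset.mem_filter]
        have hs : (exec2 A t).1 v = (exec2 A t).1 0 := by fin_cases v <;> simp [hst]
        rw [hs, hp v, ← hp 0]
        exact ⟨Finset.mem_univ v, h⟩
      rw [this]; simp
    · have : (Finset.univ.filter fun v : Fin 2 =>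
          0 < (exec2 A t).2 v ∧ A.transmits ((exec2 A t).1 v)) = ∅ := by
        apply Finset.eq_empty_iff_forall_notMem.mpr
        intro v hv
        rw [Finset.mem_filter] at hv
        apply h
        have := hv.2
        have hs : (exec2 A t).1 v = (exec2 A t).1 0 := by fin_cases v <;> simp [hst]
        rw [hs, hp v, ← hp 0] at this
        exact this
      rw [this]; simp
  have hpend : ∀ t : ℕ, 1 ≤ t → ∀ v : Fin 2, (exec2 A t).2 v = 1 := by
    intro t ht v
    rw [(key t).2 v, if_neg (by omega)]
  refine ⟨fun t => (key t).1, htx, hpend, ?_⟩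
  intro h
  obtain ⟨t, ht, h0⟩ := h 0
  rw [hpend t ht 0] at h0
  exact one_ne_zero h0
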